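/- arXiv:math/0503497 — 2 statements merged into one kernel-verified Lean document; each statement's English description precedes it below -/
import Mathlib

section
/- Let Λ ∈ ℂ with Im Λ ≠ 0 and let r₀ > 0. Then there exists a constant c₁ > 1 such that for every r ≥ r₀ and all complex numbers C₊, C₋, the function v = C₊ φ_ζ^+ + C₋ φ_ζ^− with ζ = ζ_r(Λ) satisfies c₁^{−1} r^{1/2} ‖v‖² ≤ |C₊|² + |C₋|² ≤ c₁ r^{1/2} ‖v‖². -/
open Set Filter MeasureTheory

/-- The function `φ_ζ^+`. -/
noncomputable def phiP (ζ : ℂ) (x : ℝ) : ℂ :=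
  if x < -1 then 0
  else if x ≤ 1 then Complex.sinh (ζ * (x + 1)) / Complex.sinh (2 * ζ)
  else Complex.exp (-ζ * (x - 1))

/-- The function `φ_ζ^−(x) = φ_ζ^+(−x)`. -/
noncomputable def phiM (ζ : ℂ) (x : ℝ) : ℂ := phiP ζ (-x)

/-- `ζ_r(Λ) = √(r − Λ)`, the principal branch of the square root. -/
noncomputable def zetaR (Λ : ℂ) (r : ℝ) : ℂ := ((r : ℂ) - Λ) ^ (1 / 2 : ℂ)

lemma norm_cexp (z : ℂ) : ‖Complex.exp z‖ = Real.exp z.re := by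
  rw [Complex.norm_exp]

lemma norm_csinh_le (z : ℂ) : ‖Complex.sinh z‖ ≤ (Real.exp z.re + Real.exp (-z.re)) / 2 := by
  rw [Complex.sinh, norm_div]
  have h2 : ‖(2:ℂ)‖ = 2 := by norm_num
  have h := norm_sub_le (Complex.exp z) (Complex.exp (-z))
  rw [norm_cexp, norm_cexp, Complex.neg_re] at h
  rw [h2]; linarith

lemma norm_csinh_ge (z : ℂ) : (Real.exp z.re - Real.exp (-z.re)) / 2 ≤ ‖Complex.sinh z‖ := by
  rw [Complex.sinh]
  have h := norm_sub_norm_le (Complex.exp z) (Complex.exp (-z))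
  rw [norm_cexp, norm_cexp, Complex.neg_re] at h
  rw [norm_div]
  have : ‖(2:ℂ)‖ = 2 := by norm_num
  rw [this]
  linarith

lemma phiP_of_lt {ζ : ℂ} {x : ℝ} (h : x < -1) : phiP ζ x = 0 := by simp [phiP, h]

lemma phiP_of_mem {ζ : ℂ} {x : ℝ} (h1 : -1 ≤ x) (h2 : x ≤ 1) :
    phiP ζ x = Complex.sinh (ζ * (x + 1)) / Complex.sinh (2 * ζ) := by
  simp [phiP, not_lt.mpr h1, h2]

lemma phiP_of_gt {ζ : ℂ} {x : ℝ} (h : 1 < x) : phiP ζ x = Complex.exp (-ζ * (x - 1)) := by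
  have h1 : ¬ x < -1 := by push_neg; linarith
  have h2 : ¬ x ≤ 1 := not_le.mpr h
  simp [phiP, h1, h2]

lemma measurable_phiP (ζ : ℂ) : Measurable (phiP ζ) := by
  unfold phiP
  apply Measurable.ite (measurableSet_lt measurable_id measurable_const) measurable_const
  apply Measurable.ite (measurableSet_le measurable_id measurable_const)
  · exact (Complex.continuous_sinh.comp (by continuity)).measurable.div measurable_const
  · exact (Complex.continuous_exp.comp (by continuity)).measurable

lemma re_mul_ofReal (ζ : ℂ) (t : ℝ) : (ζ * (t:ℂ)).re = ζ.re * t := by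
  simp [Complex.mul_re]

lemma sinh_two_re_pos {ζ : ℂ} (hγ : 0 < ζ.re) : 0 < Real.sinh (2 * ζ.re) := by
  rw [Real.sinh_pos_iff]; linarith

lemma norm_sinh_two_ge {ζ : ℂ} : Real.sinh (2 * ζ.re) ≤ ‖Complex.sinh (2 * ζ)‖ := by
  have h := norm_csinh_ge (2 * ζ)
  rw [Real.sinh_eq]
  have : (2 * ζ).re = 2 * ζ.re := by simp [Complex.mul_re]
  rw [this] at h; exact h

lemma norm_phiP_le {ζ : ℂ} (hγ : 0 < ζ.re) {x : ℝ} (h1 : -1 ≤ x) (h2 : x ≤ 1) :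
    ‖phiP ζ x‖ ≤ Real.exp (ζ.re * (x + 1)) / Real.sinh (2 * ζ.re) := by
  rw [phiP_of_mem h1 h2, norm_div]
  have hs := sinh_two_re_pos hγ
  have hnum : ‖Complex.sinh (ζ * (↑x + 1))‖ ≤ Real.exp (ζ.re * (x + 1)) := by
    have h := norm_csinh_le (ζ * (↑x + 1))
    have hre : (ζ * ((x:ℂ) + 1)).re = ζ.re * (x + 1) := by
      have : ((x:ℂ) + 1) = ((x + 1 : ℝ) : ℂ) := by push_cast; ring
      rw [this, re_mul_ofReal]
    rw [hre] at h
    have hnn : 0 ≤ ζ.re * (x + 1) := mul_nonneg hγ.le (by linarith)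
    have : Real.exp (-(ζ.re * (x+1))) ≤ Real.exp (ζ.re * (x+1)) :=
      Real.exp_le_exp.mpr (by linarith)
    linarith
  exact div_le_div₀ (Real.exp_nonneg _) hnum hs norm_sinh_two_ge

lemma exp_sq (a : ℝ) : Real.exp a ^ 2 = Real.exp (2 * a) := by
  rw [sq, ← Real.exp_add]; ring_nf

lemma g_eq_on_Ioi {ζ : ℂ} (Cp Cm : ℂ) {x : ℝ} (hx : 1 < x) :
    ‖Cp * phiP ζ x + Cm * phiM ζ x‖ ^ 2 = ‖Cp‖ ^ 2 * Real.exp (-(2 * ζ.re) * (x - 1)) := by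
  have hM : phiM ζ x = 0 := by
    rw [phiM, phiP_of_lt (by linarith)]
  rw [hM, mul_zero, add_zero, phiP_of_gt hx, norm_mul, mul_pow, norm_cexp]
  have hre : (-ζ * ((x:ℂ) - 1)).re = -ζ.re * (x - 1) := by
    have : ((x:ℂ) - 1) = ((x - 1 : ℝ) : ℂ) := by push_cast; ring
    rw [this, re_mul_ofReal, Complex.neg_re]
  rw [hre, exp_sq]; ring_nf

lemma hasDerivAt_exp_tail (b : ℝ) (hb : b ≠ 0) (x : ℝ) :
    HasDerivAt (fun y : ℝ => -Real.exp (-b * (y - 1)) / b) (Real.exp (-b * (x - 1))) x := by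
  have h1 : HasDerivAt (fun y : ℝ => -b * (y - 1)) (-b) x := by
    simpa using ((hasDerivAt_id x).sub_const 1).const_mul (-b)
  have h3 := ((h1.exp).neg).div_const b
  refine h3.congr_deriv ?_
  field_simp

lemma tendsto_exp_tail {b : ℝ} (hb : 0 < b) :
    Tendsto (fun y : ℝ => -Real.exp (-b * (y - 1)) / b) atTop (nhds 0) := by
  have hbot : Tendsto (fun y : ℝ => -b * (y - 1)) atTop atBot := by
    have h : Tendsto (fun y : ℝ => y - 1) atTop atTop :=
      tendsto_atTop_add_const_right atTop (-1) tendsto_id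
    exact h.const_mul_atTop_of_neg (by linarith)
  have h2 : Tendsto (fun y : ℝ => Real.exp (-b * (y - 1))) atTop (nhds 0) :=
    Real.tendsto_exp_atBot.comp hbot
  have h3 := (h2.neg).div_const b
  simpa using h3

lemma integrableOn_exp_tail {b : ℝ} (hb : 0 < b) :
    IntegrableOn (fun x : ℝ => Real.exp (-b * (x - 1))) (Ioi 1) := by
  apply integrableOn_Ioi_deriv_of_nonneg' (g := fun y => -Real.exp (-b * (y - 1)) / b)
    (fun x _ => hasDerivAt_exp_tail b hb.ne' x) (fun x _ => (Real.exp_pos _).le)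
  exact tendsto_exp_tail hb


lemma integral_exp_tail {b : ℝ} (hb : 0 < b) :
    ∫ x in Ioi (1:ℝ), Real.exp (-b * (x - 1)) = 1 / b := by
  have h := integral_Ioi_of_hasDerivAt_of_nonneg' (a := (1:ℝ))
    (g := fun y => -Real.exp (-b * (y - 1)) / b)
    (g' := fun y => Real.exp (-b * (y - 1)))
    (fun x _ => hasDerivAt_exp_tail b hb.ne' x) (fun x _ => (Real.exp_pos _).le)
    (tendsto_exp_tail hb)
  rw [h]; simp [hb.ne']; ring

lemma integrableOn_Iic_comp_neg {f : ℝ → ℝ} {c : ℝ} (hf : IntegrableOn f (Ioi c)) :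
    IntegrableOn (fun x => f (-x)) (Iic (-c)) := by
  have A : MeasurableEmbedding fun x : ℝ => -x :=
    (Homeomorph.neg ℝ).isClosedEmbedding.measurableEmbedding
  have h1 : IntegrableOn f (Ici c) (Measure.map (fun x : ℝ => -x) volume) := by
    rw [Measure.map_neg_eq_self (volume : Measure ℝ)]
    exact (integrableOn_Ici_iff_integrableOn_Ioi).mpr hf
  have h2 := (A.integrableOn_map_iff).mp h1
  have : (fun x : ℝ => -x) ⁻¹' (Ici c) = Iic (-c) := by
    ext y; simp only [mem_preimage, mem_Ici, mem_Iic]; constructor <;> intro h <;> linarith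
  rwa [this] at h2

lemma measurable_g (ζ : ℂ) (Cp Cm : ℂ) :
    Measurable (fun x => ‖Cp * phiP ζ x + Cm * phiM ζ x‖ ^ 2) := by
  apply Measurable.pow_const
  apply Measurable.norm
  exact (measurable_const.mul (measurable_phiP ζ)).add
    (measurable_const.mul ((measurable_phiP ζ).comp measurable_neg))

lemma g_le_on_Icc {ζ : ℂ} (hγ : 0 < ζ.re) (Cp Cm : ℂ) {x : ℝ} (h1 : -1 ≤ x) (h2 : x ≤ 1) :
    ‖Cp * phiP ζ x + Cm * phiM ζ x‖ ^ 2 ≤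
      2 * ‖Cp‖ ^ 2 / Real.sinh (2 * ζ.re) ^ 2 * Real.exp (2 * ζ.re * (x + 1))
      + 2 * ‖Cm‖ ^ 2 / Real.sinh (2 * ζ.re) ^ 2 * Real.exp (2 * ζ.re * (1 - x)) := by
  set s := Real.sinh (2 * ζ.re) with hs
  have hspos := sinh_two_re_pos hγ
  have hp := norm_phiP_le hγ h1 h2
  have hm : ‖phiM ζ x‖ ≤ Real.exp (ζ.re * (1 - x)) / s := by
    rw [phiM]
    have h := norm_phiP_le hγ (x := -x) (by linarith) (by linarith)
    calc ‖phiP ζ (-x)‖ ≤ Real.exp (ζ.re * (-x + 1)) / s := h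
      _ = Real.exp (ζ.re * (1 - x)) / s := by ring_nf
  set a := ‖Cp‖ * (Real.exp (ζ.re * (x + 1)) / s) with ha
  set b := ‖Cm‖ * (Real.exp (ζ.re * (1 - x)) / s) with hb
  have habnn : 0 ≤ a + b := by positivity
  have hv : ‖Cp * phiP ζ x + Cm * phiM ζ x‖ ≤ a + b := by
    calc ‖Cp * phiP ζ x + Cm * phiM ζ x‖ ≤ ‖Cp * phiP ζ x‖ + ‖Cm * phiM ζ x‖ := norm_add_le _ _
      _ = ‖Cp‖ * ‖phiP ζ x‖ + ‖Cm‖ * ‖phiM ζ x‖ := by rw [norm_mul, norm_mul]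
      _ ≤ a + b := by
          apply add_le_add
          · exact mul_le_mul_of_nonneg_left hp (norm_nonneg _)
          · exact mul_le_mul_of_nonneg_left hm (norm_nonneg _)
  have hsq : ‖Cp * phiP ζ x + Cm * phiM ζ x‖ ^ 2 ≤ (a + b) ^ 2 :=
    pow_le_pow_left₀ (norm_nonneg _) hv 2
  have h2ab : (a + b) ^ 2 ≤ 2 * a ^ 2 + 2 * b ^ 2 := by nlinarith [sq_nonneg (a - b)]
  have haa : a ^ 2 = ‖Cp‖ ^ 2 * (Real.exp (2 * ζ.re * (x + 1)) / s ^ 2) := by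
    rw [ha, mul_pow, div_pow, exp_sq]; ring_nf
  have hbb : b ^ 2 = ‖Cm‖ ^ 2 * (Real.exp (2 * ζ.re * (1 - x)) / s ^ 2) := by
    rw [hb, mul_pow, div_pow, exp_sq]; ring_nf
  calc ‖Cp * phiP ζ x + Cm * phiM ζ x‖ ^ 2 ≤ 2 * a ^ 2 + 2 * b ^ 2 := le_trans hsq h2ab
    _ = 2 * ‖Cp‖ ^ 2 / s ^ 2 * Real.exp (2 * ζ.re * (x + 1))
      + 2 * ‖Cm‖ ^ 2 / s ^ 2 * Real.exp (2 * ζ.re * (1 - x)) := by rw [haa, hbb]; ring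

lemma integral_exp_mid {c : ℝ} (hc : c ≠ 0) :
    ∫ x in Icc (-1:ℝ) 1, Real.exp (c * (x + 1)) = (Real.exp (2 * c) - 1) / c := by
  rw [MeasureTheory.integral_Icc_eq_integral_Ioc,
    ← intervalIntegral.integral_of_le (by norm_num : (-1:ℝ) ≤ 1)]
  have h : ∀ x : ℝ, Real.exp (c * (x + 1)) = Real.exp (c * x + c) := by
    intro x; ring_nf
  simp_rw [h]
  rw [intervalIntegral.integral_comp_mul_add Real.exp hc c, integral_exp]
  rw [smul_eq_mul]
  field_simp
  ring_nf
  rw [Real.exp_zero]; ring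

lemma integral_exp_mid' {c : ℝ} (hc : c ≠ 0) :
    ∫ x in Icc (-1:ℝ) 1, Real.exp (c * (1 - x)) = (Real.exp (2 * c) - 1) / c := by
  rw [MeasureTheory.integral_Icc_eq_integral_Ioc,
    ← intervalIntegral.integral_of_le (by norm_num : (-1:ℝ) ≤ 1)]
  have h : ∀ x : ℝ, Real.exp (c * (1 - x)) = Real.exp (-c * x + c) := by
    intro x; ring_nf
  simp_rw [h]
  rw [intervalIntegral.integral_comp_mul_add Real.exp (neg_ne_zero.mpr hc) c,
    integral_exp]
  rw [smul_eq_mul]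
  field_simp
  ring_nf
  field_simp [hc]
  ring
  rw [Real.exp_zero]

lemma tail_facts {ζ : ℂ} (hγ : 0 < ζ.re) (Cp Cm : ℂ) :
    IntegrableOn (fun x => ‖Cp * phiP ζ x + Cm * phiM ζ x‖ ^ 2) (Ioi 1) ∧
    ∫ x in Ioi (1:ℝ), ‖Cp * phiP ζ x + Cm * phiM ζ x‖ ^ 2 = ‖Cp‖ ^ 2 / (2 * ζ.re) := by
  have h2γ : 0 < 2 * ζ.re := by linarith
  have heq : EqOn (fun x : ℝ => ‖Cp‖ ^ 2 * Real.exp (-(2 * ζ.re) * (x - 1)))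
      (fun x => ‖Cp * phiP ζ x + Cm * phiM ζ x‖ ^ 2) (Ioi 1) := by
    intro x hx
    exact (g_eq_on_Ioi Cp Cm hx).symm
  constructor
  · exact IntegrableOn.congr_fun ((integrableOn_exp_tail h2γ).const_mul (‖Cp‖ ^ 2)) heq measurableSet_Ioi
  · rw [setIntegral_congr_fun measurableSet_Ioi heq.symm]
    rw [MeasureTheory.integral_const_mul, integral_exp_tail h2γ]
    ring

lemma key_estimates {ζ : ℂ} (hγ : 0 < ζ.re) (Cp Cm : ℂ) :
    Integrable (fun x => ‖Cp * phiP ζ x + Cm * phiM ζ x‖ ^ 2) ∧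
    (‖Cp‖ ^ 2 + ‖Cm‖ ^ 2) / (2 * ζ.re) ≤ (∫ x : ℝ, ‖Cp * phiP ζ x + Cm * phiM ζ x‖ ^ 2) ∧
    (∫ x : ℝ, ‖Cp * phiP ζ x + Cm * phiM ζ x‖ ^ 2) ≤
      (‖Cp‖ ^ 2 + ‖Cm‖ ^ 2) *
        ((1 / 2 + (Real.exp (4 * ζ.re) - 1) / Real.sinh (2 * ζ.re) ^ 2) / ζ.re) := by
  set γ := ζ.re with hγdef
  set s := Real.sinh (2 * γ) with hsdef
  have hspos : 0 < s := sinh_two_re_pos hγ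
  set g : ℝ → ℝ := fun x => ‖Cp * phiP ζ x + Cm * phiM ζ x‖ ^ 2 with hgdef
  set gs : ℝ → ℝ := fun x => ‖Cm * phiP ζ x + Cp * phiM ζ x‖ ^ 2 with hgsdef
  have hswap : ∀ x, gs (-x) = g x := by
    intro x
    simp only [hgdef, hgsdef, phiM, neg_neg]
    rw [add_comm]
  have hIoi := tail_facts hγ Cp Cm
  have hIoi_s := tail_facts hγ Cm Cp
  -- Iic piece
  have hIic_int : IntegrableOn g (Iic (-1)) := by
    have h := integrableOn_Iic_comp_neg (c := 1) hIoi_s.1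
    have : (fun x => gs (-x)) = g := funext hswap
    rwa [this] at h
  have hIic_val : ∫ x in Iic (-1:ℝ), g x = ‖Cm‖ ^ 2 / (2 * γ) := by
    have h1 : ∫ x in Iic (-1:ℝ), g x = ∫ x in Iic (-1:ℝ), gs (-x) := by
      apply setIntegral_congr_fun measurableSet_Iic
      intro x _
      exact (hswap x).symm
    rw [h1, integral_comp_neg_Iic, neg_neg]
    exact hIoi_s.2
  -- middle piece
  set A := 2 * ‖Cp‖ ^ 2 / s ^ 2 with hA
  set B := 2 * ‖Cm‖ ^ 2 / s ^ 2 with hB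
  set h : ℝ → ℝ := fun x => A * Real.exp (2 * γ * (x + 1)) + B * Real.exp (2 * γ * (1 - x))
    with hhdef
  have hcont : Continuous h := by fun_prop
  have hh_int : IntegrableOn h (Icc (-1) 1) := hcont.integrableOn_Icc
  have hgh : ∀ x ∈ Icc (-1:ℝ) 1, g x ≤ h x := fun x hx =>
    g_le_on_Icc hγ Cp Cm hx.1 hx.2
  have hIcc_int : IntegrableOn g (Icc (-1) 1) := by
    apply MeasureTheory.Integrable.mono hh_int ((measurable_g ζ Cp Cm).aestronglyMeasurable)
    filter_upwards [ae_restrict_mem measurableSet_Icc] with x hx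
    have h1 : ‖g x‖ = g x := by
      rw [Real.norm_eq_abs, abs_of_nonneg]; positivity
    have h2 : 0 ≤ h x := by
      have := (norm_nonneg (Cp * phiP ζ x + Cm * phiM ζ x))
      calc (0:ℝ) ≤ g x := by positivity
        _ ≤ h x := hgh x hx
    rw [h1, Real.norm_eq_abs, abs_of_nonneg h2]
    exact hgh x hx
  have hIcc_val : ∫ x in Icc (-1:ℝ) 1, g x ≤ (A + B) * ((Real.exp (4 * γ) - 1) / (2 * γ)) := by
    have h1 : ∫ x in Icc (-1:ℝ) 1, g x ≤ ∫ x in Icc (-1:ℝ) 1, h x :=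
      setIntegral_mono_on hIcc_int hh_int measurableSet_Icc hgh
    have h2γ : (2 * γ) ≠ 0 := by positivity
    have h2 : ∫ x in Icc (-1:ℝ) 1, h x = (A + B) * ((Real.exp (4 * γ) - 1) / (2 * γ)) := by
      rw [hhdef]
      rw [MeasureTheory.integral_add
        ((by fun_prop : Continuous fun x : ℝ => A * Real.exp (2 * γ * (x + 1))).integrableOn_Icc)
        ((by fun_prop : Continuous fun x : ℝ => B * Real.exp (2 * γ * (1 - x))).integrableOn_Icc),
        MeasureTheory.integral_const_mul, MeasureTheory.integral_const_mul,
        integral_exp_mid h2γ, integral_exp_mid' h2γ]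
      have : (2 : ℝ) * (2 * γ) = 4 * γ := by ring
      rw [this]
      ring
    linarith
  -- assembling
  have hunion1 : (Iic (-1:ℝ)) ∪ (Ioc (-1:ℝ) 1) = Iic 1 := Iic_union_Ioc_eq_Iic (by norm_num)
  have hIoc_int : IntegrableOn g (Ioc (-1) 1) := hIcc_int.mono_set Ioc_subset_Icc_self
  have hIic1_int : IntegrableOn g (Iic 1) := by
    rw [← hunion1]
    exact hIic_int.union hIoc_int
  have hint : Integrable g := by
    rw [← integrableOn_univ, ← Iic_union_Ioi (a := (1:ℝ))]
    exact hIic1_int.union hIoi.1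
  have hsplit : ∫ x, g x = (∫ x in Iic (-1:ℝ), g x) + (∫ x in Ioc (-1:ℝ) 1, g x)
      + ∫ x in Ioi (1:ℝ), g x := by
    have e1 : ∫ x, g x = (∫ x in Iic (1:ℝ), g x) + ∫ x in Ioi (1:ℝ), g x := by
      rw [← setIntegral_union (Iic_disjoint_Ioi le_rfl) measurableSet_Ioi hIic1_int hIoi.1,
        Iic_union_Ioi, setIntegral_univ]
    have e2 : ∫ x in Iic (1:ℝ), g x = (∫ x in Iic (-1:ℝ), g x) + ∫ x in Ioc (-1:ℝ) 1, g x := by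
      rw [← setIntegral_union (Iic_disjoint_Ioc le_rfl) measurableSet_Ioc hIic_int hIoc_int,
        hunion1]
    rw [e1, e2]
  have hIoc_nonneg : 0 ≤ ∫ x in Ioc (-1:ℝ) 1, g x :=
    setIntegral_nonneg measurableSet_Ioc (fun x _ => by positivity)
  have hIoc_eq_Icc : ∫ x in Ioc (-1:ℝ) 1, g x = ∫ x in Icc (-1:ℝ) 1, g x :=
    (MeasureTheory.integral_Icc_eq_integral_Ioc).symm
  refine ⟨hint, ?_, ?_⟩
  · rw [hsplit, hIic_val, hIoi.2]
    have : (‖Cp‖ ^ 2 + ‖Cm‖ ^ 2) / (2 * γ) = ‖Cm‖ ^ 2 / (2 * γ) + ‖Cp‖ ^ 2 / (2 * γ) := by ring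
    rw [this]
    linarith
  · rw [hsplit, hIic_val, hIoi.2, hIoc_eq_Icc]
    have hAB : (A + B) * ((Real.exp (4 * γ) - 1) / (2 * γ)) =
        (‖Cp‖ ^ 2 + ‖Cm‖ ^ 2) * ((Real.exp (4 * γ) - 1) / s ^ 2) / γ := by
      rw [hA, hB]
      field_simp
    have hgoal : (‖Cp‖ ^ 2 + ‖Cm‖ ^ 2) *
        ((1 / 2 + (Real.exp (4 * γ) - 1) / s ^ 2) / γ) =
        ‖Cm‖ ^ 2 / (2 * γ) + ‖Cp‖ ^ 2 / (2 * γ)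
        + (‖Cp‖ ^ 2 + ‖Cm‖ ^ 2) * ((Real.exp (4 * γ) - 1) / s ^ 2) / γ := by
      field_simp
      ring
    rw [hgoal]
    rw [hAB] at hIcc_val
    linarith


lemma zetaR_sq (Λ : ℂ) (r : ℝ) : (zetaR Λ r) ^ 2 = (r : ℂ) - Λ := by
  rw [zetaR]
  have h : (1 / 2 : ℂ) = ((2 : ℕ) : ℂ)⁻¹ := by norm_num
  rw [h, Complex.cpow_nat_inv_pow _ two_ne_zero]

lemma zetaR_re_pos {Λ : ℂ} (hΛ : Λ.im ≠ 0) (r : ℝ) : 0 < (zetaR Λ r).re := by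
  set w : ℂ := (r : ℂ) - Λ with hw
  have hwim : w.im ≠ 0 := by
    rw [hw]
    simpa using hΛ
  have hw0 : w ≠ 0 := fun h => hwim (by rw [h]; simp)
  rw [zetaR, ← hw, Complex.cpow_def_of_ne_zero hw0, Complex.exp_re]
  apply mul_pos (Real.exp_pos _)
  have him : (Complex.log w * (1 / 2 : ℂ)).im = w.arg / 2 := by
    simp [Complex.mul_im, Complex.log_im, Complex.log_re]
    ring
  rw [him]
  apply Real.cos_pos_of_mem_Ioo
  have h1 : -Real.pi < w.arg := Complex.neg_pi_lt_arg w
  have h2 : w.arg ≤ Real.pi := Complex.arg_le_pi w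
  have h3 : w.arg ≠ Real.pi := by
    intro h
    exact hwim (Complex.arg_eq_pi_iff.mp h).2
  have h4 : w.arg < Real.pi := lt_of_le_of_ne h2 h3
  constructor
  · rw [show -(Real.pi / 2) = (-Real.pi) / 2 by ring]
    linarith
  · linarith

lemma zeta_sqrt_bounds {Λ : ℂ} (hΛ : Λ.im ≠ 0) {r₀ : ℝ} (hr₀ : 0 < r₀) :
    ∃ clo chi : ℝ, 0 < clo ∧ 0 < chi ∧ ∀ r : ℝ, r₀ ≤ r →
      clo * Real.sqrt r ≤ (zetaR Λ r).re ∧ (zetaR Λ r).re ≤ chi * Real.sqrt r := by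
  set K := ‖Λ‖ with hK
  have hKpos : 0 < K := by
    rw [hK, norm_pos_iff]
    intro h
    rw [h] at hΛ
    simp at hΛ
  set m : ℝ := |Λ.im| / Real.sqrt (12 * K) with hm
  have hmpos : 0 < m := by
    apply div_pos (abs_pos.mpr hΛ)
    apply Real.sqrt_pos.mpr
    positivity
  refine ⟨min (1/2) (m / Real.sqrt (2 * K)), Real.sqrt (1 + K / r₀), ?_, ?_, ?_⟩
  · apply lt_min (by norm_num)
    apply div_pos hmpos
    apply Real.sqrt_pos.mpr
    positivity
  · apply Real.sqrt_pos.mpr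
    positivity
  intro r hr
  have hrpos : 0 < r := lt_of_lt_of_le hr₀ hr
  set ζ := zetaR Λ r with hζ
  set γ := ζ.re with hγdef
  set δ := ζ.im with hδdef
  have hγpos : 0 < γ := zetaR_re_pos hΛ r
  have hsq := zetaR_sq Λ r
  have hre : γ ^ 2 - δ ^ 2 = r - Λ.re := by
    have := congrArg Complex.re hsq
    simpa [pow_two, Complex.mul_re, Complex.sub_re, Complex.ofReal_re] using this
  have him : 2 * γ * δ = -Λ.im := by
    have := congrArg Complex.im hsq
    simp [pow_two, Complex.mul_im, Complex.sub_im, Complex.ofReal_im] at this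
    linarith
  have habs : γ ^ 2 + δ ^ 2 = ‖(r : ℂ) - Λ‖ := by
    have h1 : ‖ζ‖ ^ 2 = ‖(r : ℂ) - Λ‖ := by rw [← norm_pow, hsq]
    have h2 : γ ^ 2 + δ ^ 2 = ‖ζ‖ ^ 2 := by
      rw [Complex.sq_norm, Complex.normSq_apply]; ring
    rw [h2, h1]
  have hwle : ‖(r : ℂ) - Λ‖ ≤ r + K := by
    calc ‖(r : ℂ) - Λ‖ ≤ ‖(r : ℂ)‖ + ‖Λ‖ := norm_sub_le _ _
      _ = r + K := by rw [Complex.norm_real, Real.norm_eq_abs, abs_of_pos hrpos]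
  constructor
  · -- lower bound
    by_cases hcase : Λ.re ≤ r / 2
    · have hγ2 : r / 4 ≤ γ ^ 2 := by nlinarith [sq_nonneg δ]
      have hsr : Real.sqrt r / 2 ≤ γ := by
        have h4 : Real.sqrt (r / 4) ≤ Real.sqrt (γ ^ 2) := Real.sqrt_le_sqrt hγ2
        rw [Real.sqrt_sq hγpos.le] at h4
        have h5 : Real.sqrt (r / 4) = Real.sqrt r / 2 := by
          rw [show r / 4 = r * (1 / 2) ^ 2 by ring, Real.sqrt_mul hrpos.le,
            Real.sqrt_sq (by norm_num : (0:ℝ) ≤ 1 / 2)]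
          ring
        rw [h5] at h4
        exact h4
      calc min (1/2) (m / Real.sqrt (2 * K)) * Real.sqrt r
          ≤ 1 / 2 * Real.sqrt r :=
            mul_le_mul_of_nonneg_right (min_le_left _ _) (Real.sqrt_nonneg r)
        _ = Real.sqrt r / 2 := by ring
        _ ≤ γ := hsr
    · push_neg at hcase
      have habsre : |Λ.re| ≤ K := by
        rw [hK]
        exact Complex.abs_re_le_norm Λ
      have hrK : r < 2 * K := by
        have := le_abs_self Λ.re
        linarith
      have hδ2 : δ ^ 2 ≤ 3 * K := by nlinarith [sq_nonneg γ]
      have hδne : δ ≠ 0 := by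
        intro h
        rw [h, mul_zero] at him
        exact hΛ (by linarith)
      have e4 : (2 * γ * δ) ^ 2 = Λ.im ^ 2 := by rw [him]; ring
      have h4 : 4 * γ ^ 2 * δ ^ 2 = Λ.im ^ 2 := by linear_combination e4
      have hγ2 : m ^ 2 ≤ γ ^ 2 := by
        have hδ2pos : 0 < δ ^ 2 := by positivity
        have hm2 : m ^ 2 = Λ.im ^ 2 / (12 * K) := by
          rw [hm, div_pow, Real.sq_sqrt (by positivity), sq_abs]
        rw [hm2, div_le_iff₀ (by positivity)]
        nlinarith
      have hγm : m ≤ γ := by nlinarith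
      have hsK : Real.sqrt r ≤ Real.sqrt (2 * K) := Real.sqrt_le_sqrt hrK.le
      have hsKpos : 0 < Real.sqrt (2 * K) := Real.sqrt_pos.mpr (by positivity)
      calc min (1/2) (m / Real.sqrt (2 * K)) * Real.sqrt r
          ≤ m / Real.sqrt (2 * K) * Real.sqrt r :=
            mul_le_mul_of_nonneg_right (min_le_right _ _) (Real.sqrt_nonneg r)
        _ ≤ m / Real.sqrt (2 * K) * Real.sqrt (2 * K) :=
            mul_le_mul_of_nonneg_left hsK (by positivity)
        _ = m := div_mul_cancel₀ m hsKpos.ne'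
        _ ≤ γ := hγm
  · -- upper bound
    have h2 : K ≤ r * (K / r₀) := by
      rw [mul_div_assoc', le_div_iff₀ hr₀]
      nlinarith
    have h1 : γ ^ 2 ≤ r * (1 + K / r₀) := by
      have h3 : γ ^ 2 ≤ r + K := by nlinarith [sq_nonneg δ]
      have h5 : r + K ≤ r * (1 + K / r₀) := by
        rw [mul_add, mul_one]
        linarith
      linarith
    have h6 : γ ≤ Real.sqrt (r * (1 + K / r₀)) := by
      rw [show γ = Real.sqrt (γ ^ 2) by rw [Real.sqrt_sq hγpos.le]]
      exact Real.sqrt_le_sqrt h1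
    rw [Real.sqrt_mul hrpos.le] at h6
    calc γ ≤ Real.sqrt r * Real.sqrt (1 + K / r₀) := h6
      _ = Real.sqrt (1 + K / r₀) * Real.sqrt r := by ring

lemma ratio_bound {γ γmin : ℝ} (h0 : 0 < γmin) (h : γmin ≤ γ) :
    (Real.exp (4 * γ) - 1) / Real.sinh (2 * γ) ^ 2 ≤
      4 / (1 - Real.exp (-(4 * γmin))) ^ 2 := by
  set ε := Real.exp (-(4 * γmin)) with hε
  have hε1 : ε < 1 := by
    rw [hε, Real.exp_lt_one_iff]
    linarith
  have hεpos : 0 < ε := Real.exp_pos _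
  have h1ε : 0 < 1 - ε := by linarith
  have hεγ : Real.exp (-(4 * γ)) ≤ ε := Real.exp_le_exp.mpr (by linarith)
  have hE : Real.exp (-(2 * γ)) = Real.exp (2 * γ) * Real.exp (-(4 * γ)) := by
    rw [← Real.exp_add]; ring_nf
  have hsge : Real.exp (2 * γ) * (1 - ε) / 2 ≤ Real.sinh (2 * γ) := by
    rw [Real.sinh_eq]
    have h2 : Real.exp (-(2 * γ)) ≤ Real.exp (2 * γ) * ε := by
      rw [hE]
      exact mul_le_mul_of_nonneg_left hεγ (Real.exp_pos _).le
    have h3 : Real.exp (2 * γ) * (1 - ε) ≤ Real.exp (2 * γ) - Real.exp (-(2 * γ)) := by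
      nlinarith
    linarith
  have hspos : 0 < Real.exp (2 * γ) * (1 - ε) / 2 := by positivity
  have hs2 : (Real.exp (2 * γ) * (1 - ε) / 2) ^ 2 ≤ Real.sinh (2 * γ) ^ 2 := by
    apply pow_le_pow_left₀ hspos.le hsge
  have hnum : Real.exp (4 * γ) - 1 ≤ Real.exp (4 * γ) := by linarith
  have hEE : Real.exp (2 * γ) ^ 2 = Real.exp (4 * γ) := by
    rw [exp_sq]; ring_nf
  calc (Real.exp (4 * γ) - 1) / Real.sinh (2 * γ) ^ 2
      ≤ Real.exp (4 * γ) / ((Real.exp (2 * γ) * (1 - ε) / 2) ^ 2) := by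
        apply div_le_div₀ (Real.exp_pos _).le hnum (by positivity) hs2
    _ = 4 / (1 - ε) ^ 2 := by
        rw [div_pow, mul_pow, hEE]
        have hc : ((1:ℝ) - ε) ^ 2 ≠ 0 := by positivity
        have hEpos : Real.exp (4 * γ) ≠ 0 := (Real.exp_pos _).ne'
        field_simp
        ring

theorem stmt15 (Λ : ℂ) (hΛ : Λ.im ≠ 0) (r₀ : ℝ) (hr₀ : 0 < r₀) :
    ∃ c₁ : ℝ, 1 < c₁ ∧ ∀ r : ℝ, r₀ ≤ r → ∀ Cp Cm : ℂ,
      c₁⁻¹ * Real.sqrt r *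
          (∫ x : ℝ, ‖Cp * phiP (zetaR Λ r) x + Cm * phiM (zetaR Λ r) x‖ ^ 2) ≤
        ‖Cp‖ ^ 2 + ‖Cm‖ ^ 2 ∧
      ‖Cp‖ ^ 2 + ‖Cm‖ ^ 2 ≤
        c₁ * Real.sqrt r *
          (∫ x : ℝ, ‖Cp * phiP (zetaR Λ r) x + Cm * phiM (zetaR Λ r) x‖ ^ 2) := by
  obtain ⟨clo, chi, hclo, hchi, hbounds⟩ := zeta_sqrt_bounds hΛ hr₀
  set γmin := clo * Real.sqrt r₀ with hγmin
  have hγminpos : 0 < γmin := mul_pos hclo (Real.sqrt_pos.mpr hr₀)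
  set K₁ : ℝ := 4 / (1 - Real.exp (-(4 * γmin))) ^ 2 with hK₁
  have hεlt : Real.exp (-(4 * γmin)) < 1 := by
    rw [Real.exp_lt_one_iff]; linarith
  have hK₁pos : 0 < K₁ := by
    apply div_pos (by norm_num)
    have h1 : 0 < 1 - Real.exp (-(4 * γmin)) := by linarith
    positivity
  set c₁ := max ((1/2 + K₁) / clo) (2 * chi) + 1 with hc₁
  have hmaxnn : 0 ≤ max ((1/2 + K₁) / clo) (2 * chi) :=
    le_max_of_le_right (by positivity)
  have hc₁1 : 1 < c₁ := by
    rw [hc₁]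
    have : 0 < max ((1/2 + K₁) / clo) (2 * chi) :=
      lt_max_of_lt_right (by positivity)
    linarith
  have hc₁pos : 0 < c₁ := by linarith
  refine ⟨c₁, hc₁1, ?_⟩
  intro r hr Cp Cm
  have hrpos : 0 < r := lt_of_lt_of_le hr₀ hr
  have hsr : 0 < Real.sqrt r := Real.sqrt_pos.mpr hrpos
  obtain ⟨hlo, hhi⟩ := hbounds r hr
  set ζ := zetaR Λ r with hζ
  set γ := ζ.re with hγ
  have hγpos : 0 < γ := zetaR_re_pos hΛ r
  have hγmin_le : γmin ≤ γ := by
    have hs : Real.sqrt r₀ ≤ Real.sqrt r := Real.sqrt_le_sqrt hr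
    calc γmin = clo * Real.sqrt r₀ := hγmin
      _ ≤ clo * Real.sqrt r := mul_le_mul_of_nonneg_left hs hclo.le
      _ ≤ γ := hlo
  obtain ⟨hint, hlow, hupp⟩ := key_estimates hγpos Cp Cm
  set V := ∫ x : ℝ, ‖Cp * phiP ζ x + Cm * phiM ζ x‖ ^ 2 with hV
  set L := ‖Cp‖ ^ 2 + ‖Cm‖ ^ 2 with hL
  have hVnn : 0 ≤ V := integral_nonneg (fun x => by positivity)
  have hLnn : 0 ≤ L := by positivity
  have hclosr : 0 < clo * Real.sqrt r := by positivity
  constructor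
  · -- lower estimate
    have hratio := ratio_bound hγminpos hγmin_le
    have hupp2 : V ≤ L * ((1/2 + K₁) / γ) := by
      refine hupp.trans ?_
      gcongr
    have hdiv : (1/2 + K₁) / γ ≤ (1/2 + K₁) / (clo * Real.sqrt r) := by
      gcongr
    have h3 : Real.sqrt r * V ≤ L * ((1/2 + K₁) / clo) := by
      have h31 : Real.sqrt r * V ≤ Real.sqrt r * (L * ((1/2 + K₁) / (clo * Real.sqrt r))) := by
        apply mul_le_mul_of_nonneg_left _ hsr.le
        exact hupp2.trans (mul_le_mul_of_nonneg_left hdiv hLnn)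
      have h32 : Real.sqrt r * (L * ((1/2 + K₁) / (clo * Real.sqrt r)))
          = L * ((1/2 + K₁) / clo) := by
        field_simp
      linarith
    have h4 : Real.sqrt r * V ≤ c₁ * L := by
      have h41 : (1/2 + K₁) / clo ≤ c₁ := by
        rw [hc₁]
        have := le_max_left ((1/2 + K₁) / clo) (2 * chi)
        linarith
      calc Real.sqrt r * V ≤ L * ((1/2 + K₁) / clo) := h3
        _ ≤ L * c₁ := mul_le_mul_of_nonneg_left h41 hLnn
        _ = c₁ * L := by ring
    calc c₁⁻¹ * Real.sqrt r * V = c₁⁻¹ * (Real.sqrt r * V) := by ring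
      _ ≤ c₁⁻¹ * (c₁ * L) := mul_le_mul_of_nonneg_left h4 (inv_nonneg.mpr hc₁pos.le)
      _ = L := by field_simp
  · -- upper estimate
    have h5 : L ≤ V * (2 * γ) := (div_le_iff₀ (by positivity)).mp hlow
    have h6 : V * (2 * γ) ≤ V * (2 * chi * Real.sqrt r) := by
      apply mul_le_mul_of_nonneg_left _ hVnn
      nlinarith
    have h7 : 2 * chi ≤ c₁ := by
      rw [hc₁]
      have := le_max_right ((1/2 + K₁) / clo) (2 * chi)
      linarith
    calc L ≤ V * (2 * γ) := h5
      _ ≤ V * (2 * chi * Real.sqrt r) := h6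
      _ = (2 * chi) * Real.sqrt r * V := by ring
      _ ≤ c₁ * Real.sqrt r * V := by
          apply mul_le_mul_of_nonneg_right _ hVnn
          exact mul_le_mul_of_nonneg_right h7 hsr.le
end

section
/- There exist constants C > 0 and γ₀ > 0 such that for every complex number ζ = γ + iδ with γ = Re ζ ≥ γ₀ one has |∫_ℝ e^{−ζ|t|} φ_ζ^+(t) dt| ≤ C e^{−γ} and |∫_ℝ e^{−ζ|t|} φ_ζ^−(t) dt| ≤ C e^{−γ}. -/
open Set Filter

/-!
On `[-1, 1]` the bounds `‖sinh w‖ ≤ e^{|Re w|}` and `‖sinh 2ζ‖ ≥ e^{2γ}/4` give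
`‖φ_ζ^+(x)‖ ≤ 4 e^{γ(x-1)}`, while `‖φ_ζ^+(x)‖ = e^{-γ(x-1)}` for `x > 1`. Hence for `γ ≥ 1/2`
the integrand is dominated by `4 e^{1-γ} e^{-|x|}`, and `∫ e^{-|x|} = 2` gives `C = 8e`.
The substitution `t ↦ -t` turns the `φ_ζ^-` integral into the `φ_ζ^+` one.
-/

open MeasureTheory

theorem integral_exp_neg_abs : ∫ x : ℝ, Real.exp (-|x|) = 2 := by
  rw [integral_comp_abs (f := fun x => Real.exp (-x)), integral_exp_neg_Ioi_zero, mul_one]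

theorem integrable_exp_neg_abs : Integrable fun x : ℝ => Real.exp (-|x|) :=
  .of_integral_ne_zero (by rw [integral_exp_neg_abs]; exact two_ne_zero)

theorem norm_integral_le_of_norm_le_mul_exp_neg_abs {E : Type*} [NormedAddCommGroup E]
    [NormedSpace ℝ E] {f : ℝ → E} {c : ℝ} (hf : ∀ x, ‖f x‖ ≤ c * Real.exp (-|x|)) :
    ‖∫ x, f x‖ ≤ 2 * c := by
  calc ‖∫ x, f x‖ ≤ ∫ x, c * Real.exp (-|x|) :=
        norm_integral_le_of_norm_le (integrable_exp_neg_abs.const_mul c) (.of_forall hf)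
    _ = 2 * c := by rw [integral_const_mul, integral_exp_neg_abs, mul_comm]

theorem norm_sinh_le_exp_abs_re (z : ℂ) : ‖Complex.sinh z‖ ≤ Real.exp |z.re| := by
  have h := norm_sub_le (Complex.exp z) (Complex.exp (-z))
  rw [← Complex.two_sinh, norm_mul, Complex.norm_two, Complex.norm_exp, Complex.norm_exp,
    Complex.neg_re] at h
  have h₁ : Real.exp z.re ≤ Real.exp |z.re| := Real.exp_le_exp.2 (le_abs_self _)
  have h₂ : Real.exp (-z.re) ≤ Real.exp |z.re| := Real.exp_le_exp.2 (neg_le_abs _)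
  linarith

theorem exp_re_div_four_le_norm_sinh {z : ℂ} (hz : 1 / 2 ≤ z.re) :
    Real.exp z.re / 4 ≤ ‖Complex.sinh z‖ := by
  have h := norm_sub_norm_le (Complex.exp z) (Complex.exp (-z))
  rw [← Complex.two_sinh, norm_mul, Complex.norm_two, Complex.norm_exp, Complex.norm_exp,
    Complex.neg_re] at h
  have h₂ : 2 * Real.exp (-z.re) ≤ Real.exp z.re := by
    calc 2 * Real.exp (-z.re) ≤ Real.exp (2 * z.re) * Real.exp (-z.re) := by
          gcongr; linarith [Real.add_one_le_exp (2 * z.re)]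
      _ = Real.exp z.re := by rw [← Real.exp_add]; ring_nf
  linarith

theorem phiP_of_lt_neg_one (ζ : ℂ) {x : ℝ} (hx : x < -1) : phiP ζ x = 0 := by
  rw [phiP, if_pos hx]

theorem norm_phiP_le_of_abs_le_one {ζ : ℂ} (hζ : 1 / 4 ≤ ζ.re) {x : ℝ} (hx : |x| ≤ 1) :
    ‖phiP ζ x‖ ≤ 4 * Real.exp (ζ.re * (x - 1)) := by
  obtain ⟨hx₁, hx₂⟩ := abs_le.1 hx
  rw [phiP, if_neg (by linarith), if_pos hx₂, norm_div]
  have hnum : ‖Complex.sinh (ζ * (x + 1))‖ ≤ Real.exp (ζ.re * (x + 1)) := by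
    have hre : (ζ * (x + 1)).re = ζ.re * (x + 1) := by simp
    calc _ ≤ Real.exp |(ζ * (x + 1)).re| := norm_sinh_le_exp_abs_re _
      _ = _ := by rw [hre, abs_of_nonneg (mul_nonneg (by linarith) (by linarith))]
  have hden : Real.exp (2 * ζ.re) / 4 ≤ ‖Complex.sinh (2 * ζ)‖ := by
    have hre : (2 * ζ).re = 2 * ζ.re := by
      simp only [Complex.mul_re, Complex.re_ofNat, Complex.im_ofNat, zero_mul, sub_zero]
    simpa only [hre] using exp_re_div_four_le_norm_sinh (z := 2 * ζ) (by linarith)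
  calc _ ≤ Real.exp (ζ.re * (x + 1)) / (Real.exp (2 * ζ.re) / 4) :=
        div_le_div₀ (Real.exp_nonneg _) hnum (by positivity) hden
    _ = 4 * Real.exp (ζ.re * (x - 1)) := by
        rw [div_div_eq_mul_div, mul_comm, mul_div_assoc, ← Real.exp_sub]; ring_nf

theorem norm_phiP_of_one_lt (ζ : ℂ) {x : ℝ} (hx : 1 < x) :
    ‖phiP ζ x‖ = Real.exp (-ζ.re * (x - 1)) := by
  rw [phiP, if_neg (by linarith), if_neg (by linarith), Complex.norm_exp]
  simp

theorem norm_exp_mul_phiP_le {ζ : ℂ} (hζ : 1 / 2 ≤ ζ.re) (x : ℝ) :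
    ‖Complex.exp (-ζ * |x|) * phiP ζ x‖ ≤
      4 * Real.exp 1 * Real.exp (-ζ.re) * Real.exp (-|x|) := by
  have hexp : ‖Complex.exp (-ζ * |x|)‖ = Real.exp (-ζ.re * |x|) := by
    rw [Complex.norm_exp]; simp
  have hrhs : 4 * Real.exp 1 * Real.exp (-ζ.re) * Real.exp (-|x|) =
      4 * Real.exp (1 + -ζ.re + -|x|) := by
    rw [Real.exp_add, Real.exp_add]; ring
  rw [norm_mul, hexp, hrhs]
  rcases lt_or_ge x (-1) with hx | hx
  · rw [phiP_of_lt_neg_one ζ hx, norm_zero, mul_zero]; positivity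
  rcases le_or_gt x 1 with hx' | hx'
  · have habs : |x| ≤ 1 := abs_le.2 ⟨hx, hx'⟩
    calc _ ≤ Real.exp (-ζ.re * |x|) * (4 * Real.exp (ζ.re * (x - 1))) := by
          gcongr; exact norm_phiP_le_of_abs_le_one (by linarith) habs
      _ = 4 * Real.exp (-ζ.re * |x| + ζ.re * (x - 1)) := by rw [Real.exp_add]; ring
      _ ≤ _ := by
          gcongr _ * Real.exp ?_
          nlinarith [mul_nonneg (by linarith : 0 ≤ ζ.re) (sub_nonneg.2 (le_abs_self x))]
  · rw [norm_phiP_of_one_lt ζ hx', abs_of_pos (by linarith), ← Real.exp_add]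
    calc _ ≤ Real.exp (1 + -ζ.re + -x) := Real.exp_le_exp.2 (by nlinarith)
      _ ≤ _ := by linarith [Real.exp_pos (1 + -ζ.re + -x)]

theorem integral_exp_mul_phiM (ζ : ℂ) :
    ∫ t : ℝ, Complex.exp (-ζ * |t|) * phiM ζ t = ∫ t : ℝ, Complex.exp (-ζ * |t|) * phiP ζ t := by
  rw [← integral_neg_eq_self]
  simp only [phiM, neg_neg, abs_neg]

theorem stmt18 :
    ∃ C > (0 : ℝ), ∃ γ₀ > (0 : ℝ), ∀ ζ : ℂ, γ₀ ≤ ζ.re →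
      ‖∫ t : ℝ, Complex.exp (-ζ * |t|) * phiP ζ t‖ ≤
        C * Real.exp (-ζ.re) ∧
      ‖∫ t : ℝ, Complex.exp (-ζ * |t|) * phiM ζ t‖ ≤
        C * Real.exp (-ζ.re) := by
  refine ⟨8 * Real.exp 1, by positivity, 1 / 2, by norm_num, fun ζ hζ => ?_⟩
  have hP : ‖∫ t : ℝ, Complex.exp (-ζ * |t|) * phiP ζ t‖ ≤ 8 * Real.exp 1 * Real.exp (-ζ.re) :=
    (norm_integral_le_of_norm_le_mul_exp_neg_abs (norm_exp_mul_phiP_le hζ)).trans_eq (by ring)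
  exact ⟨hP, integral_exp_mul_phiM ζ ▸ hP⟩
end
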